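/- arXiv:0909.4962 — 3 statements merged into one kernel-verified Lean document; each statement's English description precedes it below -/
import Mathlib

section
/- Suppose f, f' : ℝ≥0 → ℝ are continuous, both eventually zero (i.e., for each there exists L such that the function vanishes for all l ≥ L), and satisfy the same right-derivative condition: for every l ≥ 0 there exists δ > 0 and a real number a_l (the same a_l for both functions) with f(l') = f(l) + a_l(l'-l) and f'(l') = f'(l) + a_l(l'-l) for all l' ∈ [l, l+δ]. Then f = f' on [0, ∞). -/
/-! The difference `f - f'` has right derivative `0` at every point of `[0, ∞)`. By the mean
value inequality for right derivatives, a continuous function with this property is constant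
on `[l, ∞)`, and being eventually zero, that constant is `0`. -/

open Set Filter

theorem hasDerivWithinAt_Ici_of_eq_affine_on_Icc {E : Type*} [NormedAddCommGroup E]
    [NormedSpace ℝ E] {f : ℝ → E} {x δ : ℝ} {a : E} (hδ : 0 < δ)
    (h : ∀ y ∈ Icc x (x + δ), f y = f x + (y - x) • a) :
    HasDerivWithinAt f a (Ici x) x := by
  have haffine : HasDerivWithinAt (fun y => f x + (y - x) • a) a (Ici x) x := by
    simpa using ((hasDerivAt_id x).sub_const x).smul_const a |>.const_add (f x) |>.hasDerivWithinAt
  exact haffine.congr_of_eventuallyEq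
    (eventually_of_mem (Icc_mem_nhdsGE (by linarith)) h) (by simp)

theorem eqOn_zero_of_hasDerivWithinAt_Ici_zero {E : Type*} [NormedAddCommGroup E]
    [NormedSpace ℝ E] {g : ℝ → E} {a : ℝ}
    (hcont : ContinuousOn g (Ici a))
    (hderiv : ∀ x ∈ Ici a, HasDerivWithinAt g 0 (Ici x) x)
    (hzero : ∀ᶠ x in atTop, g x = 0) :
    EqOn g 0 (Ici a) := by
  intro l hl
  obtain ⟨M, hM⟩ := (hzero.and (eventually_ge_atTop l)).exists
  have hconst := constant_of_has_deriv_right_zero (hcont.mono (Icc_subset_Ici_self.trans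
    (Ici_subset_Ici.mpr hl))) (fun x hx => hderiv x (hl.trans hx.1)) M ⟨hM.2, le_rfl⟩
  rw [Pi.zero_apply, ← hconst, hM.1]

/-- Two continuous, eventually-zero functions on `[0,∞)` that are locally affine to the
right with the same slopes are equal. -/
theorem eq_of_same_right_slopes (f f' : ℝ → ℝ)
    (hcf : ContinuousOn f (Set.Ici (0 : ℝ)))
    (hcf' : ContinuousOn f' (Set.Ici (0 : ℝ)))
    (hzf : ∃ L : ℝ, ∀ l, L ≤ l → f l = 0)
    (hzf' : ∃ L : ℝ, ∀ l, L ≤ l → f' l = 0)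
    (hslope : ∀ l : ℝ, 0 ≤ l → ∃ δ > 0, ∃ a : ℝ,
      ∀ l' ∈ Set.Icc l (l + δ),
        f l' = f l + a * (l' - l) ∧ f' l' = f' l + a * (l' - l)) :
    ∀ l : ℝ, 0 ≤ l → f l = f' l := by
  have hderiv : ∀ x ∈ Ici (0 : ℝ), HasDerivWithinAt (f - f') 0 (Ici x) x := by
    intro x hx
    obtain ⟨δ, hδ, a, ha⟩ := hslope x hx
    have hf : HasDerivWithinAt f a (Ici x) x :=
      hasDerivWithinAt_Ici_of_eq_affine_on_Icc hδ fun y hy => by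
        rw [smul_eq_mul, mul_comm]; exact (ha y hy).1
    have hf' : HasDerivWithinAt f' a (Ici x) x :=
      hasDerivWithinAt_Ici_of_eq_affine_on_Icc hδ fun y hy => by
        rw [smul_eq_mul, mul_comm]; exact (ha y hy).2
    simpa using hf.sub hf'
  have hzero : ∀ᶠ x in atTop, (f - f') x = 0 := by
    obtain ⟨L, hL⟩ := hzf
    obtain ⟨L', hL'⟩ := hzf'
    filter_upwards [eventually_ge_atTop L, eventually_ge_atTop L'] with x hx hx'
    simp [hL x hx, hL' x hx']
  intro l hl
  exact sub_eq_zero.mp (eqOn_zero_of_hasDerivWithinAt_Ici_zero (hcf.sub hcf') hderiv hzero hl)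
end

section
/- Let n ≥ 1. Among all sequences (y₀,…,y_n) of natural numbers with y₀ = 0, fixed final value y_n = k (where n - k is even and 0 ≤ k ≤ n), and |y_{i+1} - y_i| = 1 for all i, the sum Σ y_i is maximized exactly by the unique valley-free (standard) sequence. -/
/-!
Every admissible sequence `z` with `z 0 = 0` and `z n = k` is 1-Lipschitz, hence
`z i ≤ min i (k + (n - i))` pointwise. A valley-free sequence rises with slope one until
its first descent and, having no valley, descends from then on; so it attains this bound
at every index and maximizes the sum. Conversely, raising a valley by two gives an
admissible sequence with the same endpoints and a larger sum.
-/

def IsStepPath (n : ℕ) (z : ℕ → ℕ) : Prop :=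
  ∀ i < n, z (i + 1) = z i + 1 ∨ z i = z (i + 1) + 1

def HasValley (n : ℕ) (y : ℕ → ℕ) : Prop :=
  ∃ j, 0 < j ∧ j < n ∧ y j < y (j - 1) ∧ y j < y (j + 1)

namespace IsStepPath

variable {n : ℕ} {z : ℕ → ℕ}

theorem apply_le_apply_add (hz : IsStepPath n z) {i j : ℕ} (hij : i ≤ j) (hjn : j ≤ n) :
    z j ≤ z i + (j - i) := by
  induction j, hij using Nat.le_induction with
  | base => omega
  | succ j _ ih =>
    have := hz j (by omega)
    have := ih (by omega)
    omega

theorem apply_le_apply_add' (hz : IsStepPath n z) {i j : ℕ} (hij : i ≤ j) (hjn : j ≤ n) :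
    z i ≤ z j + (j - i) := by
  induction j, hij using Nat.le_induction with
  | base => omega
  | succ j _ ih =>
    have := hz j (by omega)
    have := ih (by omega)
    omega

theorem apply_le_min (hz : IsStepPath n z) (h0 : z 0 = 0) {i : ℕ} (hi : i ≤ n) :
    z i ≤ min i (z n + (n - i)) := by
  have := hz.apply_le_apply_add (Nat.zero_le i) hi
  have := hz.apply_le_apply_add' hi le_rfl
  omega

theorem descent_succ (hz : IsStepPath n z) (hv : ¬ HasValley n z) {j : ℕ} (hj : j + 1 < n)
    (hdesc : z (j + 1) + 1 = z j) : z (j + 2) + 1 = z (j + 1) := by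
  rcases hz (j + 1) hj with hup | hdown
  · exact absurd ⟨j + 1, by omega, hj, by rw [Nat.add_sub_cancel]; omega, by omega⟩ hv
  · exact hdown.symm

theorem apply_eq_add_sub_of_descent (hz : IsStepPath n z) (hv : ¬ HasValley n z) {m : ℕ}
    (hdesc : z (m + 1) + 1 = z m) {i : ℕ} (hmi : m ≤ i) (hi : i ≤ n) :
    z i = z n + (n - i) := by
  have hdescents : ∀ j, m ≤ j → j < n → z (j + 1) + 1 = z j := by
    intro j hmj
    induction j, hmj using Nat.le_induction with
    | base => exact fun _ => hdesc
    | succ j _ ih => exact fun hj => hz.descent_succ hv hj (ih (by omega))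
  have hfall : ∀ j, i ≤ j → j ≤ n → z i = z j + (j - i) := by
    intro j hij
    induction j, hij using Nat.le_induction with
    | base => simp
    | succ j _ ih =>
      intro hj
      have := hdescents j (by omega) (by omega)
      have := ih (by omega)
      omega
  exact hfall n hi le_rfl

theorem apply_eq_min_of_not_hasValley (hz : IsStepPath n z) (h0 : z 0 = 0)
    (hv : ¬ HasValley n z) {i : ℕ} (hi : i ≤ n) : z i = min i (z n + (n - i)) := by
  refine le_antisymm (hz.apply_le_min h0 hi) ?_
  -- `z` descends right after the last index `m` at which it is still on the diagonal.
  set m := Nat.findGreatest (fun i => z i = i) n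
  have hmn : m ≤ n := Nat.findGreatest_le n
  have hm : z m = m := Nat.findGreatest_spec (P := fun i => z i = i) (Nat.zero_le n) h0
  by_cases him : i ≤ m
  · have := hz.apply_le_apply_add him hmn
    omega
  · have hoff : z (m + 1) ≠ m + 1 :=
      Nat.findGreatest_is_greatest (P := fun i => z i = i) (n := n) (by omega) (by omega)
    have hdesc : z (m + 1) + 1 = z m := by have := hz m (by omega); omega
    have := hz.apply_eq_add_sub_of_descent hv hdesc (by omega) hi
    omega

theorem update_of_valley (hz : IsStepPath n z) {j : ℕ} (hj0 : 0 < j) (hjn : j < n)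
    (hleft : z j < z (j - 1)) (hright : z j < z (j + 1)) :
    IsStepPath n (Function.update z j (z j + 2)) := by
  obtain ⟨k, rfl⟩ : ∃ k, j = k + 1 := ⟨j - 1, by omega⟩
  rw [Nat.add_sub_cancel] at hleft
  have hk := hz k (by omega)
  have hk1 := hz (k + 1) hjn
  intro i hi
  rcases lt_trichotomy i k with h | rfl | h
  · rw [Function.update_of_ne (by omega), Function.update_of_ne (by omega)]
    exact hz i hi
  · rw [Function.update_self, Function.update_of_ne (by omega)]
    omega
  · rcases eq_or_ne i (k + 1) with rfl | h'
    · rw [Function.update_self, Function.update_of_ne (by omega)]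
      omega
    · rw [Function.update_of_ne (by omega), Function.update_of_ne h']
      exact hz i hi

end IsStepPath

theorem sum_maximized_iff_valley_free_general (n : ℕ) (y : ℕ → ℕ)
    (h0 : y 0 = 0)
    (hstep : ∀ i < n, y (i + 1) = y i + 1 ∨ y i = y (i + 1) + 1) :
    (¬ ∃ j, 0 < j ∧ j < n ∧ y j < y (j - 1) ∧ y j < y (j + 1)) ↔
    (∀ z : ℕ → ℕ, z 0 = 0 → z n = y n →
      (∀ i < n, z (i + 1) = z i + 1 ∨ z i = z (i + 1) + 1) →
      (∑ i ∈ Finset.range (n + 1), z i) ≤ ∑ i ∈ Finset.range (n + 1), y i) := by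
  have hy : IsStepPath n y := hstep
  constructor
  · intro hv z hz0 hzn hz
    refine Finset.sum_le_sum fun i hi => ?_
    have hin : i ≤ n := Nat.lt_succ_iff.mp (Finset.mem_range.mp hi)
    rw [hy.apply_eq_min_of_not_hasValley h0 hv hin, ← hzn]
    exact IsStepPath.apply_le_min hz hz0 hin
  · rintro hmax ⟨j, hj0, hjn, hleft, hright⟩
    set z := Function.update y j (y j + 2)
    have hsum : ∑ i ∈ Finset.range (n + 1), y i < ∑ i ∈ Finset.range (n + 1), z i :=
      Finset.sum_lt_sum (fun i _ => le_update_self_iff.mpr (by omega) i)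
        ⟨j, Finset.mem_range.mpr (by omega), by simp [z]⟩
    have hle := hmax z ((Function.update_of_ne hj0.ne _ _).trans h0)
      (Function.update_of_ne (by omega) _ _) (hy.update_of_valley hj0 hjn hleft hright)
    omega

/-- Among all ±1-step sequences of natural numbers starting at 0 with fixed length `n`
and fixed endpoint, the sum of the entries is maximized exactly by the valley-free
(standard) sequence. -/
theorem sum_maximized_iff_valley_free (n : ℕ) (hn : 1 ≤ n) (y : ℕ → ℕ)
    (h0 : y 0 = 0)
    (hstep : ∀ i < n, y (i + 1) = y i + 1 ∨ y i = y (i + 1) + 1) :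
    (¬ ∃ j, 0 < j ∧ j < n ∧ y j < y (j - 1) ∧ y j < y (j + 1)) ↔
    (∀ z : ℕ → ℕ, z 0 = 0 → z n = y n →
      (∀ i < n, z (i + 1) = z i + 1 ∨ z i = z (i + 1) + 1) →
      (∑ i ∈ Finset.range (n + 1), z i) ≤ ∑ i ∈ Finset.range (n + 1), y i) :=
  sum_maximized_iff_valley_free_general n y h0 hstep
end

section
/- For every integer n ≥ 3 and every j with 2 ≤ j ≤ n-1, and natural number m ≥ 0, the four case-identities (i)–(iv) imply: the value Σ_{i=1}^{n-1} sin(iπ/n)·c_i is unchanged when the local slope contributions (c_{j-1}, c_j, c_{j+1}) determined by a ±1-step sequence with a valley at j are replaced by those of the sequence with y_j replaced by y_j + 2, where the contribution at index i is ε_i·sin(y_i π/n)/sin(π/n) with ε_i ∈ {-1, 0, 1} determined by: ε_i = -1 if y_{i-1} = y_{i+1} = y_i - 1, ε_i = +1 if y_{i-1} = y_{i+1} = y_i + 1, and ε_i = 0 if y_{i-1} ≠ y_{i+1}. -/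
open Real

/-- The local slope contribution sign `εᵢ` of a ±1-step sequence at index `i`:
`-1` if both neighbours are strictly smaller, `+1` if both neighbours are strictly
larger, `0` if the two neighbours differ. -/
noncomputable def slopeSign (y : ℕ → ℕ) (i : ℕ) : ℝ :=
  if y (i - 1) = y (i + 1) ∧ y i = y (i - 1) + 1 then -1
  else if y (i - 1) = y (i + 1) ∧ y (i - 1) = y i + 1 then 1
  else 0

/-- The total slope `S(y) = Σ_{i=1}^{n-1} sin(iπ/n)·εᵢ·sin(yᵢπ/n)/sin(π/n)`. -/
noncomputable def totalSlope (n : ℕ) (y : ℕ → ℕ) : ℝ :=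
  ∑ i ∈ Finset.Icc 1 (n - 1),
    sin (i * π / n) * slopeSign y i * sin (y i * π / n) / sin (π / n)

/-! On a ±1-step sequence `εᵢ = (y_{i-1} + y_{i+1} - 2 yᵢ) / 2`, so raising `y_j` by 2 at a valley
turns `ε_j` from `1` into `-1`, raises `ε_{j-1}` and `ε_{j+1}` by `1`, and leaves every other term
alone. Writing `θ = π / n` and `s = sin ((y_j + 1) θ)`, the change of `S · sin θ` is
`(sin ((j-1) θ) + sin ((j+1) θ)) s - sin (j θ) (sin ((y_j + 2) θ) + sin (y_j θ))`,
and both halves equal `2 sin (j θ) cos θ · s`. The term of index `n` carries the factor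
`sin (n θ) = 0`, so the sum may run up to `n`, which covers the case `j + 1 = n`. -/

open Finset Function

def IsUnitStep (a b : ℕ) : Prop := b = a + 1 ∨ a = b + 1

section SlopeSign

variable {y z : ℕ → ℕ} {i j : ℕ}

theorem slopeSign_eq_half_laplacian (hl : IsUnitStep (y (i - 1)) (y i))
    (hr : IsUnitStep (y i) (y (i + 1))) :
    slopeSign y i = ((y (i - 1) : ℝ) + y (i + 1) - 2 * y i) / 2 := by
  unfold slopeSign IsUnitStep at *
  rcases hl with hl | hl <;> rcases hr with hr | hr <;> split_ifs <;>
    first | omega | (rify at hl hr; linarith)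

theorem slopeSign_of_valley (hl : y (i - 1) = y i + 1) (hr : y (i + 1) = y i + 1) :
    slopeSign y i = 1 := by
  rw [slopeSign, if_neg (by omega), if_pos ⟨by omega, hl⟩]

theorem slopeSign_of_peak (hl : y i = y (i - 1) + 1) (hr : y i = y (i + 1) + 1) :
    slopeSign y i = -1 := by
  rw [slopeSign, if_pos ⟨by omega, hl⟩]

theorem slopeSign_congr (hl : z (i - 1) = y (i - 1)) (hi : z i = y i)
    (hr : z (i + 1) = y (i + 1)) : slopeSign z i = slopeSign y i := by
  rw [slopeSign, slopeSign, hl, hi, hr]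

theorem slopeSign_update_of_far (hj : j + 1 < i ∨ i + 1 < j) (v : ℕ) :
    slopeSign (update y j v) i = slopeSign y i :=
  slopeSign_congr (update_of_ne (by omega) _ _) (update_of_ne (by omega) _ _)
    (update_of_ne (by omega) _ _)

theorem slopeSign_update_succ (hl : IsUnitStep (y (i - 1)) (y i)) (hr : y i = y (i + 1) + 1) :
    slopeSign (update y (i + 1) (y (i + 1) + 2)) i = slopeSign y i + 1 := by
  rw [slopeSign_eq_half_laplacian hl (.inr hr), slopeSign_eq_half_laplacian] <;>
    simp only [update_self, update_of_ne (show i - 1 ≠ i + 1 by omega),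
      update_of_ne (show i ≠ i + 1 by omega), IsUnitStep] at hl ⊢
  · push_cast
    ring
  all_goals omega

theorem slopeSign_update_pred (hl : y i = y (i - 1) + 1) (hr : IsUnitStep (y i) (y (i + 1))) :
    slopeSign (update y (i - 1) (y (i - 1) + 2)) i = slopeSign y i + 1 := by
  have hi : i ≠ 0 := by
    rintro rfl
    simp at hl
  rw [slopeSign_eq_half_laplacian (.inl hl) hr, slopeSign_eq_half_laplacian] <;>
    simp only [update_self, update_of_ne (show i + 1 ≠ i - 1 by omega),
      update_of_ne (show i ≠ i - 1 by omega), IsUnitStep] at hr ⊢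
  · push_cast
    ring
  all_goals omega

end SlopeSign

noncomputable def slopeTerm (n : ℕ) (y : ℕ → ℕ) (i : ℕ) : ℝ :=
  sin (i * π / n) * slopeSign y i * sin (y i * π / n)

theorem sin_natCast_mul_pi_div_self (n : ℕ) : sin (n * π / n) = 0 := by
  rcases eq_or_ne n 0 with rfl | hn
  · simp
  · rw [mul_div_cancel_left₀ _ (Nat.cast_ne_zero.2 hn), sin_pi]

theorem slopeTerm_self (n : ℕ) (y : ℕ → ℕ) : slopeTerm n y n = 0 := by
  rw [slopeTerm, sin_natCast_mul_pi_div_self, zero_mul, zero_mul]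

theorem totalSlope_eq_sum_slopeTerm (n : ℕ) (y : ℕ → ℕ) :
    totalSlope n y = (∑ i ∈ Icc 1 n, slopeTerm n y i) / sin (π / n) := by
  rw [totalSlope, ← sum_div]
  congr 1
  rcases n with _ | n
  · rfl
  · rw [sum_Icc_succ_top (by omega), slopeTerm_self, add_zero]
    rfl

section SlopeTerm

variable {n : ℕ} {y : ℕ → ℕ} {i j : ℕ}

theorem sum_slopeTerm_update (hj : 2 ≤ j) (hjn : j + 1 ≤ n) (v : ℕ) :
    ∑ i ∈ Icc 1 n, slopeTerm n (update y j v) i = ∑ i ∈ Icc 1 n, slopeTerm n y i +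
      ∑ i ∈ Icc (j - 1) (j + 1), (slopeTerm n (update y j v) i - slopeTerm n y i) := by
  rw [← sub_eq_iff_eq_add', ← sum_sub_distrib]
  refine (sum_subset (Icc_subset_Icc (by omega) hjn) fun i _ hi ↦ ?_).symm
  rw [mem_Icc] at hi
  rw [slopeTerm, slopeTerm, slopeSign_update_of_far (by omega), update_of_ne (by omega), sub_self]

theorem slopeTerm_update_valley (hl : y (i - 1) = y i + 1) (hr : y (i + 1) = y i + 1) :
    slopeTerm n (update y i (y i + 2)) i =
      slopeTerm n y i - sin (i * π / n) * (sin ((y i + 2 : ℕ) * π / n) + sin (y i * π / n)) := by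
  have hi : i ≠ 0 := by
    rintro rfl
    simp at hl
  rw [slopeTerm, slopeTerm, slopeSign_of_valley hl hr, slopeSign_of_peak] <;>
    simp only [update_self, update_of_ne (show i - 1 ≠ i by omega),
      update_of_ne (show i + 1 ≠ i by omega)]
  all_goals first | omega | ring

theorem slopeTerm_update_succ (hl : IsUnitStep (y (i - 1)) (y i)) (hr : y i = y (i + 1) + 1) :
    slopeTerm n (update y (i + 1) (y (i + 1) + 2)) i =
      slopeTerm n y i + sin (i * π / n) * sin (y i * π / n) := by
  rw [slopeTerm, slopeTerm, slopeSign_update_succ hl hr, update_of_ne (by omega)]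
  ring

theorem slopeTerm_update_pred (hl : y i = y (i - 1) + 1) (hr : IsUnitStep (y i) (y (i + 1))) :
    slopeTerm n (update y (i - 1) (y (i - 1) + 2)) i =
      slopeTerm n y i + sin (i * π / n) * sin (y i * π / n) := by
  have hi : i ≠ 0 := by
    rintro rfl
    simp at hl
  rw [slopeTerm, slopeTerm, slopeSign_update_pred hl hr, update_of_ne (by omega)]
  ring

end SlopeTerm

theorem sin_sub_mul_sub_sin_mul_add_sin_add_mul (x t b : ℝ) :
    sin (x - t) * sin b - sin x * (sin (b + t) + sin (b - t)) + sin (x + t) * sin b = 0 := by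
  simp only [sin_add, sin_sub]
  ring

theorem totalSlope_valley_fill_general (n : ℕ) (y : ℕ → ℕ)
    (hstep : ∀ i < n, y (i + 1) = y i + 1 ∨ y i = y (i + 1) + 1)
    (j : ℕ) (hj2 : 2 ≤ j) (hjn : j ≤ n - 1)
    (hvl : y (j - 1) = y j + 1) (hvr : y (j + 1) = y j + 1) :
    totalSlope n y = totalSlope n (Function.update y j (y j + 2)) := by
  obtain ⟨k, rfl⟩ : ∃ k, j = k + 2 := ⟨j - 2, by omega⟩
  replace hvl : y (k + 1) = y (k + 2) + 1 := hvl
  have hleft := slopeTerm_update_succ (n := n) (hstep k (by omega)) hvl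
  have hmid := slopeTerm_update_valley (n := n) hvl hvr
  have hright : slopeTerm n (update y (k + 2) (y (k + 2) + 2)) (k + 3) =
      slopeTerm n y (k + 3) + sin ((k + 3 : ℕ) * π / n) * sin (y (k + 3) * π / n) := by
    rcases (by omega : k + 3 < n ∨ k + 3 = n) with h | rfl
    · exact slopeTerm_update_pred hvr (hstep _ h)
    · rw [slopeTerm_self, slopeTerm_self, sin_natCast_mul_pi_div_self]
      ring
  set y' := update y (k + 2) (y (k + 2) + 2)
  suffices ∑ i ∈ Icc (k + 1) (k + 3), (slopeTerm n y' i - slopeTerm n y i) = 0 by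
    rw [totalSlope_eq_sum_slopeTerm, totalSlope_eq_sum_slopeTerm,
      sum_slopeTerm_update (by omega) (by omega), show k + 2 - 1 = k + 1 from rfl, this, add_zero]
  rw [sum_Icc_succ_top (by omega), sum_Icc_succ_top (by omega), Icc_self, sum_singleton]
  simp only [hleft, hmid, hright, hvl, hvr]
  linear_combination (norm := (push_cast; ring_nf))
    sin_sub_mul_sub_sin_mul_add_sin_add_mul ((k + 2) * π / n) (π / n) ((y (k + 2) + 1) * π / n)

/-- Filling a valley of a ±1-step sequence does not change the total slope. -/
theorem totalSlope_valley_fill (n : ℕ) (hn : 3 ≤ n) (y : ℕ → ℕ)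
    (h0 : y 0 = 0)
    (hstep : ∀ i < n, y (i + 1) = y i + 1 ∨ y i = y (i + 1) + 1)
    (j : ℕ) (hj2 : 2 ≤ j) (hjn : j ≤ n - 1)
    (hvl : y (j - 1) = y j + 1) (hvr : y (j + 1) = y j + 1) :
    totalSlope n y = totalSlope n (Function.update y j (y j + 2)) :=
  totalSlope_valley_fill_general n y hstep j hj2 hjn hvl hvr
end
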